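/- arXiv:1412.4169 — 5 statements merged into one kernel-verified Lean document; each statement's English description precedes it below -/
import Mathlib

section
/- Let a₁, a₂, a₃, a₄, a₅ be positive integers such that a₁ + a₂ + a₃ = a₄ + a₅ and such that aᵢ + aⱼ ≠ a_k for all pairwise distinct indices i, j, k. Then the multiset {a₁+a₄+a₅, a₂+a₄+a₅, a₃+a₄+a₅, a₄, a₅} is not equal to the multiset {a₂+a₃, a₁+a₃, a₁+a₂, a₁+a₂+a₃+a₄, a₁+a₂+a₃+a₅}. In particular, a₄ does not belong to the second multiset. -/
theorem stmt_6 (a : Fin 5 → ℕ) (hpos : ∀ i, 0 < a i)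
    (hsum : a 0 + a 1 + a 2 = a 3 + a 4)
    (hne : ∀ i j k : Fin 5, i ≠ j → j ≠ k → i ≠ k → a i + a j ≠ a k) :
    ({a 0 + a 3 + a 4, a 1 + a 3 + a 4, a 2 + a 3 + a 4, a 3, a 4} : Multiset ℕ) ≠
      ({a 1 + a 2, a 0 + a 2, a 0 + a 1,
        a 0 + a 1 + a 2 + a 3, a 0 + a 1 + a 2 + a 4} : Multiset ℕ) ∧
    a 3 ∉ ({a 1 + a 2, a 0 + a 2, a 0 + a 1,
        a 0 + a 1 + a 2 + a 3, a 0 + a 1 + a 2 + a 4} : Multiset ℕ) := by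
  have h0 := hpos 0
  have h1 := hpos 1
  have h2 := hpos 2
  have h4 := hpos 4
  have e1 := hne 1 2 3 (by decide) (by decide) (by decide)
  have e2 := hne 0 2 3 (by decide) (by decide) (by decide)
  have e3 := hne 0 1 3 (by decide) (by decide) (by decide)
  have hnotmem : a 3 ∉ ({a 1 + a 2, a 0 + a 2, a 0 + a 1,
      a 0 + a 1 + a 2 + a 3, a 0 + a 1 + a 2 + a 4} : Multiset ℕ) := by
    simp only [Multiset.insert_eq_cons, Multiset.mem_cons, Multiset.mem_singleton]
    push_neg
    refine ⟨fun h => e1 h.symm, fun h => e2 h.symm, fun h => e3 h.symm, by omega, by omega⟩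
  refine ⟨fun h => ?_, hnotmem⟩
  apply hnotmem
  rw [← h]
  simp
end

section
/- Let a₁, a₂, a₃, a₄, a₅ be positive integers with a₁ + a₂ + a₃ = a₄ + a₅, and suppose aᵢ + aⱼ ≠ a_k for all pairwise distinct i, j, k. Then for every positive integer k, the polynomial k·(X^{a₁+a₄+a₅} + X^{a₂+a₄+a₅} + X^{a₃+a₄+a₅} + X^{a₄} + X^{a₅}) - k·(X^{a₂+a₃} + X^{a₁+a₃} + X^{a₁+a₂} + X^{a₁+a₂+a₃+a₄} + X^{a₁+a₂+a₃+a₅}) is nonzero in ℤ[X]. -/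
open Polynomial in
theorem stmt_7 (a : Fin 5 → ℕ) (hpos : ∀ i, 0 < a i)
    (hsum : a 0 + a 1 + a 2 = a 3 + a 4)
    (hne : ∀ i j k : Fin 5, i ≠ j → j ≠ k → i ≠ k → a i + a j ≠ a k)
    (k : ℕ) (hk : 0 < k) :
    (C (k : ℤ)) * (X ^ (a 0 + a 3 + a 4) + X ^ (a 1 + a 3 + a 4) + X ^ (a 2 + a 3 + a 4)
        + X ^ (a 3) + X ^ (a 4)) -
      (C (k : ℤ)) * (X ^ (a 1 + a 2) + X ^ (a 0 + a 2) + X ^ (a 0 + a 1)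
        + X ^ (a 0 + a 1 + a 2 + a 3) + X ^ (a 0 + a 1 + a 2 + a 4)) ≠ 0 := by
  intro h
  have h0 := hpos 0
  have h1 := hpos 1
  have h2 := hpos 2
  have h3 := hpos 3
  have h4 := hpos 4
  have e1 : a 1 + a 2 ≠ a 3 := hne 1 2 3 (by decide) (by decide) (by decide)
  have e2 : a 0 + a 2 ≠ a 3 := hne 0 2 3 (by decide) (by decide) (by decide)
  have e3 : a 0 + a 1 ≠ a 3 := hne 0 1 3 (by decide) (by decide) (by decide)
  have hc := congrArg (fun p => p.coeff (a 3)) h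
  simp only [coeff_sub, coeff_add, coeff_C_mul, coeff_X_pow, coeff_zero,
    if_pos (rfl : a 3 = a 3),
    if_neg (show ¬ a 3 = a 0 + a 3 + a 4 by omega),
    if_neg (show ¬ a 3 = a 1 + a 3 + a 4 by omega),
    if_neg (show ¬ a 3 = a 2 + a 3 + a 4 by omega),
    if_neg (show ¬ a 3 = a 1 + a 2 from fun h => e1 h.symm),
    if_neg (show ¬ a 3 = a 0 + a 2 from fun h => e2 h.symm),
    if_neg (show ¬ a 3 = a 0 + a 1 from fun h => e3 h.symm),
    if_neg (show ¬ a 3 = a 0 + a 1 + a 2 + a 3 by omega),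
    if_neg (show ¬ a 3 = a 0 + a 1 + a 2 + a 4 by omega)] at hc
  have hk' : (k : ℤ) ≠ 0 := by exact_mod_cast hk.ne'
  by_cases h43 : a 3 = a 4
  · rw [if_pos h43] at hc; norm_num at hc; omega
  · rw [if_neg h43] at hc; norm_num at hc; omega
end

section
/- Let a : Fin 5 → ℕ with a(i) > 0 for all i, and suppose there are no subsets S, T of Fin 5 with |S| = 1, |T| = 2 and Σ_{i∈S} a(i) = Σ_{i∈T} a(i). Then it is impossible that both (i) there exist subsets with |S| = 1, |T| = 4 and equal sums, and (ii) there exist subsets with |S'| = 2, |T'| = 3 and equal sums. -/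
theorem stmt_11 (a : Fin 5 → ℕ) (hpos : ∀ i, 0 < a i)
    (h12 : ¬ ∃ S T : Finset (Fin 5), S.card = 1 ∧ T.card = 2 ∧
      ∑ i ∈ S, a i = ∑ i ∈ T, a i) :
    ¬ ((∃ S T : Finset (Fin 5), S.card = 1 ∧ T.card = 4 ∧
          ∑ i ∈ S, a i = ∑ i ∈ T, a i) ∧
       (∃ S' T' : Finset (Fin 5), S'.card = 2 ∧ T'.card = 3 ∧
          ∑ i ∈ S', a i = ∑ i ∈ T', a i)) := by
  rintro ⟨⟨S, T, hS1, hT4, hST⟩, ⟨S', T', hS2, hT3, hST'⟩⟩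
  obtain ⟨s, rfl⟩ := Finset.card_eq_one.mp hS1
  rw [Finset.sum_singleton] at hST
  -- s ∉ T
  have hsT : s ∉ T := by
    intro h
    have he : ∑ i ∈ T.erase s, a i + a s = ∑ i ∈ T, a i :=
      Finset.sum_erase_add T a h
    have hne : (T.erase s).Nonempty := by
      rw [← Finset.card_pos, Finset.card_erase_of_mem h, hT4]; norm_num
    have hp : 0 < ∑ i ∈ T.erase s, a i :=
      Finset.sum_pos (fun i _ => hpos i) hne
    omega
  -- {s} ∪ T = univ
  have hU : insert s T = Finset.univ := by
    apply Finset.eq_univ_of_card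
    rw [Finset.card_insert_of_notMem hsT, hT4]
    simp
  have htot : ∑ i, a i = 2 * a s := by
    rw [← hU, Finset.sum_insert hsT]
    omega
  -- analyze the 2-3 pair
  have hd1 : (S' \ T').card + (S' ∩ T').card = S'.card :=
    Finset.card_sdiff_add_card_inter S' T'
  have hd2 : (T' \ S').card + (T' ∩ S').card = T'.card :=
    Finset.card_sdiff_add_card_inter T' S'
  have hs1 : ∑ i ∈ S' ∩ T', a i + ∑ i ∈ S' \ T', a i = ∑ i ∈ S', a i :=
    Finset.sum_inter_add_sum_sdiff S' T' a
  have hs2 : ∑ i ∈ T' ∩ S', a i + ∑ i ∈ T' \ S', a i = ∑ i ∈ T', a i :=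
    Finset.sum_inter_add_sum_sdiff T' S' a
  rw [Finset.inter_comm T' S'] at hd2 hs2
  have hsum : ∑ i ∈ S' \ T', a i = ∑ i ∈ T' \ S', a i := by omega
  have hk : (S' ∩ T').card ≤ 2 := by
    calc (S' ∩ T').card ≤ S'.card := Finset.card_le_card (Finset.inter_subset_left)
    _ = 2 := hS2
  interval_cases hI : (S' ∩ T').card
  · -- disjoint case: S' ∪ T' = univ
    have hdisj : Disjoint S' T' := by
      rw [Finset.disjoint_iff_inter_eq_empty]
      exact Finset.card_eq_zero.mp hI
    have hU' : S' ∪ T' = Finset.univ := by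
      apply Finset.eq_univ_of_card
      rw [Finset.card_union_of_disjoint hdisj, hS2, hT3]
      simp
    have htot' : ∑ i ∈ S', a i + ∑ i ∈ T', a i = ∑ i, a i := by
      rw [← hU', Finset.sum_union hdisj]
    have hS'eq : ∑ i ∈ S', a i = a s := by omega
    by_cases hsS' : s ∈ S'
    · have he : ∑ i ∈ S'.erase s, a i + a s = ∑ i ∈ S', a i :=
        Finset.sum_erase_add S' a hsS'
      have hne : (S'.erase s).Nonempty := by
        rw [← Finset.card_pos, Finset.card_erase_of_mem hsS', hS2]
        norm_num
      have hp : 0 < ∑ i ∈ S'.erase s, a i :=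
        Finset.sum_pos (fun i _ => hpos i) hne
      omega
    · exact h12 ⟨{s}, S', by simp, hS2, by rw [Finset.sum_singleton, hS'eq]⟩
  · -- overlap 1: get a 1-2 equality
    exact h12 ⟨S' \ T', T' \ S', by omega, by omega, hsum⟩
  · -- overlap 2: a positive set sums to 0
    have h0 : (S' \ T').card = 0 := by omega
    have : ∑ i ∈ S' \ T', a i = 0 := by
      rw [Finset.card_eq_zero.mp h0, Finset.sum_empty]
    have hne : (T' \ S').Nonempty := by
      rw [← Finset.card_pos]; omega
    have hp : 0 < ∑ i ∈ T' \ S', a i :=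
      Finset.sum_pos (fun i _ => hpos i) hne
    omega
end

section
/- Let k ≥ 1, and let b, c, d, e, f, g : Fin k → ℕ be functions taking positive values, such that b(i) ≠ e(j) + f(j) for all i, j ∈ Fin k. Then in ℚ⟦X⟧, Σ_{i} X^{b(i)} · (1 - X^{b(i)})⁻¹ · (1 - X^{c(i)})⁻¹ · (1 - X^{d(i)})⁻¹ ≠ Σ_{i} X^{e(i)+f(i)} · (1 - X^{e(i)})⁻¹ · (1 - X^{f(i)})⁻¹ · (1 - X^{g(i)})⁻¹. -/
open PowerSeries

noncomputable def Sgeo (a : ℕ) : PowerSeries ℚ :=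
  PowerSeries.mk fun n => if a ∣ n then 1 else 0

lemma Sgeo_nonneg (a n : ℕ) : 0 ≤ (PowerSeries.coeff n) (Sgeo a) := by
  simp only [Sgeo, PowerSeries.coeff_mk]
  split <;> norm_num

lemma Sgeo_zero (a : ℕ) : (PowerSeries.coeff 0) (Sgeo a) = 1 := by
  simp [Sgeo]

lemma inv_one_sub_pow (a : ℕ) (ha : 0 < a) :
    ((1 : PowerSeries ℚ) - X ^ a)⁻¹ = Sgeo a := by
  symm
  rw [PowerSeries.eq_inv_iff_mul_eq_one]
  · ext n
    rcases Nat.eq_zero_or_pos n with rfl | hn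
    · rw [PowerSeries.coeff_zero_eq_constantCoeff, map_mul]
      simp [Sgeo, PowerSeries.constantCoeff_X, ha.ne', PowerSeries.coeff_zero_eq_constantCoeff]
    · have heq : a ∣ n ↔ a ≤ n ∧ a ∣ n - a := by
        constructor
        · intro h; exact ⟨Nat.le_of_dvd hn h, Nat.dvd_sub h dvd_rfl⟩
        · rintro ⟨h2, ⟨m, hm⟩⟩
          exact ⟨m + 1, by rw [Nat.mul_succ, ← Nat.eq_add_of_sub_eq h2 hm]⟩
      simp only [mul_sub, mul_one, map_sub, PowerSeries.coeff_mul_X_pow', Sgeo,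
        PowerSeries.coeff_mk, PowerSeries.coeff_one]
      split_ifs <;> simp_all
  · simp [Sgeo, PowerSeries.constantCoeff_X, ha.ne']

lemma coeff_mul_nonneg {φ ψ : PowerSeries ℚ} (hφ : ∀ n, 0 ≤ PowerSeries.coeff n φ)
    (hψ : ∀ n, 0 ≤ PowerSeries.coeff n ψ) (n : ℕ) :
    0 ≤ PowerSeries.coeff n (φ * ψ) := by
  rw [PowerSeries.coeff_mul]
  exact Finset.sum_nonneg fun p _ => mul_nonneg (hφ _) (hψ _)

/-- Key: coefficient of `X^m * Sgeo a * Sgeo b * Sgeo c` at `n`. -/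
lemma coeff_term (m a b c n : ℕ) :
    (PowerSeries.coeff n) ((X : PowerSeries ℚ) ^ m * Sgeo a * Sgeo b * Sgeo c)
      = if m ≤ n then (PowerSeries.coeff (n - m)) (Sgeo a * Sgeo b * Sgeo c) else 0 := by
  rw [mul_assoc, mul_assoc, ← mul_assoc (Sgeo a), PowerSeries.coeff_X_pow_mul']

lemma coeff_SSS_nonneg (a b c n : ℕ) :
    0 ≤ (PowerSeries.coeff n) (Sgeo a * Sgeo b * Sgeo c) :=
  coeff_mul_nonneg (coeff_mul_nonneg (Sgeo_nonneg a) (Sgeo_nonneg b)) (Sgeo_nonneg c) n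

lemma coeff_SSS_zero (a b c : ℕ) :
    (PowerSeries.coeff 0) (Sgeo a * Sgeo b * Sgeo c) = 1 := by
  rw [PowerSeries.coeff_zero_eq_constantCoeff, map_mul, map_mul,
    ← PowerSeries.coeff_zero_eq_constantCoeff, Sgeo_zero, Sgeo_zero, Sgeo_zero]
  norm_num

lemma coeff_term_nonneg (m a b c n : ℕ) :
    0 ≤ (PowerSeries.coeff n) ((X : PowerSeries ℚ) ^ m * Sgeo a * Sgeo b * Sgeo c) := by
  rw [coeff_term]
  split
  · exact coeff_SSS_nonneg _ _ _ _
  · exact le_refl 0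

open PowerSeries in
theorem stmt_13 (k : ℕ) (hk : 1 ≤ k) (b c d e f g : Fin k → ℕ)
    (hb : ∀ i, 0 < b i) (hc : ∀ i, 0 < c i) (hd : ∀ i, 0 < d i)
    (he : ∀ i, 0 < e i) (hf : ∀ i, 0 < f i) (hg : ∀ i, 0 < g i)
    (hne : ∀ i j, b i ≠ e j + f j) :
    (∑ i, (X : PowerSeries ℚ) ^ (b i) * (1 - X ^ (b i))⁻¹ * (1 - X ^ (c i))⁻¹ *
        (1 - X ^ (d i))⁻¹) ≠
      ∑ i, (X : PowerSeries ℚ) ^ (e i + f i) * (1 - X ^ (e i))⁻¹ * (1 - X ^ (f i))⁻¹ *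
        (1 - X ^ (g i))⁻¹ := by
  intro h
  have hne' : Nonempty (Fin k) := ⟨⟨0, hk⟩⟩
  -- rewrite inverses
  have hrw : (∑ i, (X : PowerSeries ℚ) ^ (b i) * Sgeo (b i) * Sgeo (c i) * Sgeo (d i)) =
      ∑ i, (X : PowerSeries ℚ) ^ (e i + f i) * Sgeo (e i) * Sgeo (f i) * Sgeo (g i) := by
    have := h
    simp only [inv_one_sub_pow _ (hb _), inv_one_sub_pow _ (hc _), inv_one_sub_pow _ (hd _),
      inv_one_sub_pow _ (he _), inv_one_sub_pow _ (hf _), inv_one_sub_pow _ (hg _)] at this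
    exact this
  -- minimums
  obtain ⟨i0, hi0⟩ := Finset.exists_min_image Finset.univ b ⟨⟨0, hk⟩, Finset.mem_univ _⟩
  obtain ⟨j0, hj0⟩ := Finset.exists_min_image Finset.univ (fun j => e j + f j)
    ⟨⟨0, hk⟩, Finset.mem_univ _⟩
  have key : ∀ n : ℕ, (PowerSeries.coeff n)
      (∑ i, (X : PowerSeries ℚ) ^ (b i) * Sgeo (b i) * Sgeo (c i) * Sgeo (d i))
      = (PowerSeries.coeff n)
      (∑ i, (X : PowerSeries ℚ) ^ (e i + f i) * Sgeo (e i) * Sgeo (f i) * Sgeo (g i)) := by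
    intro n; rw [hrw]
  rcases lt_or_gt_of_ne (hne i0 j0) with hlt | hlt
  · -- b i0 < e j0 + f j0 : coeff at b i0
    have h1 := key (b i0)
    rw [map_sum, map_sum] at h1
    have hL : 0 < ∑ i, (PowerSeries.coeff (b i0))
        ((X : PowerSeries ℚ) ^ (b i) * Sgeo (b i) * Sgeo (c i) * Sgeo (d i)) := by
      apply Finset.sum_pos' (fun i _ => coeff_term_nonneg _ _ _ _ _) ⟨i0, Finset.mem_univ _, ?_⟩
      rw [coeff_term, if_pos le_rfl, Nat.sub_self, coeff_SSS_zero]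
      norm_num
    have hR : (∑ i, (PowerSeries.coeff (b i0))
        ((X : PowerSeries ℚ) ^ (e i + f i) * Sgeo (e i) * Sgeo (f i) * Sgeo (g i))) = 0 := by
      apply Finset.sum_eq_zero
      intro j _
      rw [coeff_term, if_neg]
      have := hj0.2 j (Finset.mem_univ _)
      omega
    rw [h1, hR] at hL
    exact lt_irrefl 0 hL
  · -- e j0 + f j0 < b i0 : coeff at e j0 + f j0
    have h1 := key (e j0 + f j0)
    rw [map_sum, map_sum] at h1
    have hR : 0 < ∑ i, (PowerSeries.coeff (e j0 + f j0))
        ((X : PowerSeries ℚ) ^ (e i + f i) * Sgeo (e i) * Sgeo (f i) * Sgeo (g i)) := by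
      apply Finset.sum_pos' (fun i _ => coeff_term_nonneg _ _ _ _ _) ⟨j0, Finset.mem_univ _, ?_⟩
      rw [coeff_term, if_pos le_rfl, Nat.sub_self, coeff_SSS_zero]
      norm_num
    have hL : (∑ i, (PowerSeries.coeff (e j0 + f j0))
        ((X : PowerSeries ℚ) ^ (b i) * Sgeo (b i) * Sgeo (c i) * Sgeo (d i))) = 0 := by
      apply Finset.sum_eq_zero
      intro i _
      rw [coeff_term, if_neg]
      have h2 := hi0.2 i (Finset.mem_univ _)
      have := hne i j0
      omega
    rw [hL] at h1
    exact hR.ne' h1.symm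
end

section
/- Let A be a finite multiset of positive integers and let w be a positive integer such that w is not equal to the sum of any sub-multiset of A of cardinality at least 2. Then the coefficient of X^w in the polynomial ∏_{a ∈ A} (1 - X^a) ∈ ℤ[X] equals the negative of the multiplicity of w in A. -/
open Polynomial in
lemma aux_const_coeff (s : Multiset ℕ) (hs : ∀ a ∈ s, 0 < a) :
    ((s.map (fun a => (1 : ℤ[X]) - X ^ a)).prod).coeff 0 = 1 := by
  rw [Polynomial.coeff_zero_eq_eval_zero, Polynomial.eval_multiset_prod]
  rw [Multiset.map_map]
  have : Multiset.map ((fun p : ℤ[X] => p.eval 0) ∘ fun a => (1 : ℤ[X]) - X ^ a) s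
      = Multiset.map (fun _ => (1 : ℤ)) s := by
    apply Multiset.map_congr rfl
    intro a ha
    simp [zero_pow (hs a ha).ne']
  rw [this]
  simp

open Polynomial in
theorem stmt_14 (A : Multiset ℕ) (hA : ∀ a ∈ A, 0 < a) (w : ℕ) (hw : 0 < w)
    (hprim : ∀ B : Multiset ℕ, B ≤ A → 2 ≤ Multiset.card B → B.sum ≠ w) :
    ((A.map (fun a => (1 : ℤ[X]) - X ^ a)).prod).coeff w = -(A.count w : ℤ) := by
  induction A using Multiset.induction generalizing w with
  | empty => simp [Polynomial.coeff_one, hw.ne']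
  | cons a s ih =>
    have hAs : ∀ x ∈ s, 0 < x := fun x hx => hA x (Multiset.mem_cons_of_mem hx)
    have hQw : ((s.map (fun a => (1 : ℤ[X]) - X ^ a)).prod).coeff w
        = -(s.count w : ℤ) := by
      exact ih hAs w hw (fun B hB h2 => hprim B (hB.trans (Multiset.le_cons_self s a)) h2)
    set Q := (s.map (fun a => (1 : ℤ[X]) - X ^ a)).prod with hQ
    rw [Multiset.map_cons, Multiset.prod_cons, sub_mul, one_mul, Polynomial.coeff_sub,
      hQw, mul_comm, Polynomial.coeff_mul_X_pow']
    rcases lt_trichotomy a w with hlt | heq | hgt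
    · have haw : a ≠ w := hlt.ne
      have hpos : 0 < w - a := Nat.sub_pos_of_lt hlt
      have hcount0 : s.count (w - a) = 0 := by
        rw [Multiset.count_eq_zero]
        intro hmem
        apply hprim (a ::ₘ {w - a}) ?_ (by simp) ?_
        · exact Multiset.cons_le_cons a (Multiset.singleton_le.mpr hmem)
        · simp [Multiset.sum_cons, Nat.add_sub_cancel' hlt.le]
      have hQwa : Q.coeff (w - a) = 0 := by
        have := ih hAs (w - a) hpos (fun B hB h2 hsum => by
          apply hprim (a ::ₘ B) (Multiset.cons_le_cons a hB)
          · simp; omega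
          · simp [Multiset.sum_cons, hsum, Nat.add_sub_cancel' hlt.le])
        rw [this, hcount0]; simp
      rw [if_pos hlt.le, hQwa, Multiset.count_cons_of_ne (Ne.symm haw)]
      ring
    · subst heq
      rw [if_pos le_rfl, Nat.sub_self, aux_const_coeff s hAs,
        Multiset.count_cons_self]
      push_cast
      ring
    · rw [if_neg (not_le.mpr hgt), Multiset.count_cons_of_ne (by omega)]
      ring
end
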